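/- arXiv:1512.04603 — 3 statements merged into one kernel-verified Lean document; each statement's English description precedes it below -/
import Mathlib

section
/- Let M be a hermitian k×k matrix over Λ = ℤ[t,t⁻¹] with det(M) ≠ 0. If w ∈ Λ^k is such that vᵀ M(t⁻¹)⁻¹ w̄ ∈ Λ for all v ∈ Λ^k, then w ∈ MΛ^k. In other words, the adjoint map from Λ^k/MΛ^k to the conjugated dual module Hom_Λ(Λ^k/MΛ^k, Q/Λ), sending w to the functional v ↦ vᵀ M(t⁻¹)⁻¹ w̄ mod Λ, is injective. -/
/-!
Testing the hypothesis on the standard basis vectors shows that `x = M(t⁻¹)⁻¹ w̄` has entries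
in `Λ`. Since `t ↦ t⁻¹` is a ring involution of `ℚ(t)` preserving `Λ`, conjugating
`M(t⁻¹) x = w̄` gives `M x̄ = w` with `x̄ ∈ Λᵏ`.
-/

open Matrix

set_option maxHeartbeats 2000000
set_option synthInstance.maxHeartbeats 2000000

/-- The variable `t`, i.e. `X`, in the rational function field `Q = ℚ(t)`. -/
noncomputable def tQ : RatFunc ℚ := RatFunc.X

/-- The involution `t ↦ t⁻¹` of `ℚ(t)`, applied as a function. -/
noncomputable def conjQ : RatFunc ℚ → RatFunc ℚ :=
  RatFunc.eval (algebraMap ℚ (RatFunc ℚ)) tQ⁻¹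

/-- The Laurent polynomial ring `Λ = ℤ[t,t⁻¹]`, as a subring of `ℚ(t)`. -/
noncomputable def Lam : Subring (RatFunc ℚ) := Subring.closure {tQ, tQ⁻¹}

namespace RatFunc

variable {K : Type*} [Field K]

theorem eval₂_X_inv_ne_zero {p : Polynomial K} (hp : p ≠ 0) :
    p.eval₂ (algebraMap K (RatFunc K)) X⁻¹ ≠ 0 := by
  let : Invertible (X⁻¹ : RatFunc K) := invertibleOfNonzero (inv_ne_zero X_ne_zero)
  -- `p(X⁻¹) = 0` would force the reversed polynomial to vanish at the transcendental `X`.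
  rw [Ne, ← Polynomial.eval₂_reverse_eq_zero_iff, invOf_eq_inv, inv_inv, ← Polynomial.aeval_def,
    ← algebraMap_X, Polynomial.aeval_algebraMap_apply, Polynomial.aeval_X_left_apply,
    map_eq_zero_iff _ (IsFractionRing.injective _ _), Polynomial.reverse_eq_zero]
  exact hp

noncomputable def invX : RatFunc K →+* RatFunc K where
  toFun := eval (algebraMap K (RatFunc K)) X⁻¹
  map_one' := eval_one _ _
  map_mul' x y := eval_mul _ _ (eval₂_X_inv_ne_zero (denom_ne_zero x))
    (eval₂_X_inv_ne_zero (denom_ne_zero y))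
  map_zero' := eval_zero _ _
  map_add' x y := eval_add _ _ (eval₂_X_inv_ne_zero (denom_ne_zero x))
    (eval₂_X_inv_ne_zero (denom_ne_zero y))

@[simp]
theorem invX_X : invX (X : RatFunc K) = X⁻¹ := eval_X _ _

@[simp]
theorem invX_C (a : K) : invX (C a) = C a := by
  simp [invX, ← algebraMap_eq_C]

theorem invX_involutive : Function.Involutive (invX : RatFunc K → RatFunc K) := by
  suffices h : invX.comp invX = RingHom.id (RatFunc K) from RingHom.congr_fun h
  refine IsLocalization.ringHom_ext (nonZeroDivisors (Polynomial K)) (Polynomial.ringHom_ext ?_ ?_)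
  · intro a; simp [algebraMap_C]
  · simp [algebraMap_X]

end RatFunc

open RatFunc

theorem conjQ_eq_invX : conjQ = invX := by
  unfold conjQ tQ
  -- `conjQ` evaluates through `DivisionRing.toRatAlgebra`, not through `RatFunc`'s algebra structure.
  exact congrArg (eval · X⁻¹) (RingHom.ext_rat _ _)

theorem invX_mem_Lam {x : RatFunc ℚ} (hx : x ∈ Lam) : invX x ∈ Lam := by
  have hmap : Lam.map invX ≤ Lam := by
    rw [Lam, RingHom.map_closure, Set.image_pair, tQ, invX_X, map_inv₀, invX_X, inv_inv,
      Set.pair_comm]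
  exact hmap ⟨x, hx, rfl⟩

theorem Subring.forall_mem_of_forall_dotProduct_mem {K n : Type*} [Ring K] [Fintype n]
    [DecidableEq n] {R : Subring K} {y : n → K} (h : ∀ v : n → K, (∀ i, v i ∈ R) → v ⬝ᵥ y ∈ R)
    (i : n) : y i ∈ R := by
  have hsingle : ∀ j, (Pi.single i 1 : n → K) j ∈ R := by
    intro j
    by_cases hj : j = i
    · subst hj; simp [R.one_mem]
    · simp [Pi.single_eq_of_ne hj, R.zero_mem]
  simpa [single_dotProduct] using h _ hsingle

theorem Matrix.mulVec_conj_mulVec_inv_map_conj {K n : Type*} [Field K] [Fintype n]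
    [DecidableEq n] {σ : K →+* K} (hσ : Function.Involutive σ) {M : Matrix n n K}
    (hdet : M.det ≠ 0) (w : n → K) :
    M *ᵥ (σ ∘ ((M.map σ)⁻¹ *ᵥ (σ ∘ w))) = w := by
  have hunit : IsUnit (M.map σ).det := by
    rw [← RingHom.mapMatrix_apply, ← RingHom.map_det]
    exact (map_ne_zero σ).mpr hdet |>.isUnit
  have hsolve : M.map σ *ᵥ ((M.map σ)⁻¹ *ᵥ (σ ∘ w)) = σ ∘ w := by
    rw [mulVec_mulVec, mul_nonsing_inv _ hunit, one_mulVec]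
  have hMσσ : (M.map σ).map σ = M := by
    ext i j; exact hσ _
  funext i
  calc (M *ᵥ (σ ∘ ((M.map σ)⁻¹ *ᵥ (σ ∘ w)))) i
      = σ ((M.map σ *ᵥ ((M.map σ)⁻¹ *ᵥ (σ ∘ w))) i) := by rw [RingHom.map_mulVec, hMσσ]
    _ = w i := by rw [hsolve]; exact hσ _

theorem hermitian_matrix_linking_pairing_adjoint_injective_general (k : ℕ)
    (M : Matrix (Fin k) (Fin k) (RatFunc ℚ))
    (hdet : M.det ≠ 0)
    (w : Fin k → RatFunc ℚ)
    (h : ∀ v : Fin k → RatFunc ℚ, (∀ i, v i ∈ Lam) →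
      v ⬝ᵥ (M.map conjQ)⁻¹.mulVec (fun i => conjQ (w i)) ∈ Lam) :
    ∃ u : Fin k → RatFunc ℚ, (∀ i, u i ∈ Lam) ∧ w = M.mulVec u := by
  rw [conjQ_eq_invX] at h
  have hx := Subring.forall_mem_of_forall_dotProduct_mem h
  exact ⟨_, fun i => invX_mem_Lam (hx i),
    (Matrix.mulVec_conj_mulVec_inv_map_conj invX_involutive hdet w).symm⟩

theorem hermitian_matrix_linking_pairing_adjoint_injective (k : ℕ)
    (M : Matrix (Fin k) (Fin k) (RatFunc ℚ)) (hM : ∀ i j, M i j ∈ Lam)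
    (hherm : (M.map conjQ)ᵀ = M) (hdet : M.det ≠ 0)
    (w : Fin k → RatFunc ℚ) (hw : ∀ i, w i ∈ Lam)
    (h : ∀ v : Fin k → RatFunc ℚ, (∀ i, v i ∈ Lam) →
      v ⬝ᵥ (M.map conjQ)⁻¹.mulVec (fun i => conjQ (w i)) ∈ Lam) :
    ∃ u : Fin k → RatFunc ℚ, (∀ i, u i ∈ Lam) ∧ w = M.mulVec u :=
  hermitian_matrix_linking_pairing_adjoint_injective_general k M hdet w h
end

section
/- Let J and P be k×k integer matrices with det(J) = ±1, Jᵀ = -J, and PᵀJP = J (so P is invertible over ℤ). Then for all x, w, y, v ∈ Λ^k: (i) ((tP - I)x)ᵀ · J · (t⁻¹P - I)⁻¹ · w̄ = -t·xᵀJP⁻¹w̄ ∈ Λ, and (ii) vᵀ · J · (t⁻¹P - I)⁻¹ · conj((tP - I)y) = vᵀJȳ ∈ Λ. Consequently the pairing (v,w) ↦ vᵀJ(t⁻¹P - I)⁻¹w̄ ∈ Q/Λ is well defined on the quotient module Λ^k/(tP - I)Λ^k in both variables. -/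
open Matrix

set_option maxHeartbeats 2000000
set_option synthInstance.maxHeartbeats 2000000

/-! Rearranging `PᵀJP = J` gives `(tP - 1)ᵀ J = -t PᵀJ (t⁻¹P - 1)`, so in (i) the inverse of
`t⁻¹P - 1` cancels and leaves `-t PᵀJ = -t JP⁻¹`, an integral matrix. In (ii) the conjugate of
`(tP - 1)y` is `(t⁻¹P - 1)ȳ`, which cancels the inverse directly. The inverse exists because
`t⁻¹P - 1 = -t⁻¹(t - P)` and `det(t - P)` is the characteristic polynomial of `P`; conjugation
is evaluation at the transcendental element `t⁻¹`, hence a ring endomorphism of `ℚ(t)`, and it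
preserves `Λ` since it swaps the generators `t` and `t⁻¹`. -/

section MatrixIdentities

variable {K R n : Type*} [Field K] [CommRing R] [Fintype n] [DecidableEq n]

theorem Matrix.isUnit_det_of_transpose_mul_mul_eq {P J : Matrix n n R}
    (hP : Pᵀ * J * P = J) (hJ : IsUnit J.det) : IsUnit P.det := by
  have hdet : P.det * P.det * J.det = 1 * J.det := by
    simpa [det_mul, mul_comm, mul_left_comm, mul_assoc] using congrArg det hP
  exact IsUnit.of_mul_eq_one _ (hJ.mul_left_injective hdet)

theorem Matrix.transpose_mul_eq_mul_inv {P J : Matrix n n R}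
    (hP : Pᵀ * J * P = J) (hPdet : IsUnit P.det) : Pᵀ * J = J * P⁻¹ :=
  calc Pᵀ * J = Pᵀ * J * P * P⁻¹ := by
        rw [Matrix.mul_assoc _ P, mul_nonsing_inv _ hPdet, Matrix.mul_one]
    _ = J * P⁻¹ := by rw [hP]

theorem Matrix.transpose_smul_sub_one_mul {P J : Matrix n n K} (hP : Pᵀ * J * P = J) {t : K}
    (ht : t ≠ 0) : (t • P - 1)ᵀ * J = (-t • (Pᵀ * J)) * (t⁻¹ • P - 1) := by
  rw [transpose_sub, transpose_smul, transpose_one, Matrix.sub_mul, Matrix.smul_mul,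
    Matrix.one_mul, Matrix.mul_sub, Matrix.mul_one, Matrix.mul_smul, Matrix.smul_mul, hP,
    smul_smul, mul_neg, inv_mul_cancel₀ ht]
  module

theorem Matrix.smul_sub_one_mulVec_dotProduct {P J : Matrix n n K} (hP : Pᵀ * J * P = J)
    {t : K} (ht : t ≠ 0) (hA : IsUnit (t⁻¹ • P - 1).det) (x u : n → K) :
    (t • P - 1) *ᵥ x ⬝ᵥ (J * (t⁻¹ • P - 1)⁻¹) *ᵥ u = -t * (x ⬝ᵥ (Pᵀ * J) *ᵥ u) := by
  rw [← vecMul_transpose, ← dotProduct_mulVec, mulVec_mulVec, ← Matrix.mul_assoc,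
    transpose_smul_sub_one_mul hP ht, Matrix.mul_assoc, mul_nonsing_inv _ hA, Matrix.mul_one,
    smul_mulVec, dotProduct_smul, smul_eq_mul]

theorem Matrix.dotProduct_mul_inv_mulVec_mulVec {A : Matrix n n R}
    (hA : IsUnit A.det) (J : Matrix n n R) (v u : n → R) :
    v ⬝ᵥ (J * A⁻¹) *ᵥ (A *ᵥ u) = v ⬝ᵥ J *ᵥ u := by
  rw [mulVec_mulVec, Matrix.mul_assoc, nonsing_inv_mul _ hA, Matrix.mul_one]

end MatrixIdentities

section Determinant

variable {K : Type*} [Field K] {n : Type*} [Fintype n] [DecidableEq n]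

theorem RatFunc.det_X_smul_one_sub_map_ne_zero (M : Matrix n n K) :
    ((X : RatFunc K) • 1 - M.map (algebraMap K (RatFunc K))).det ≠ 0 := by
  have hchar : M.charmatrix.map (algebraMap (Polynomial K) (RatFunc K)) =
      (X : RatFunc K) • 1 - M.map (algebraMap K (RatFunc K)) := by
    ext i j
    by_cases h : i = j
    · subst h; simp [Matrix.charmatrix_apply_eq, algebraMap_X]
    · simp [Matrix.charmatrix_apply_ne _ _ _ h, Matrix.one_apply_ne h]
  rw [← hchar, ← RingHom.mapMatrix_apply, ← RingHom.map_det, ← Matrix.charpoly,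
    map_ne_zero_iff _ (algebraMap_injective K)]
  exact M.charpoly_monic.ne_zero

theorem RatFunc.isUnit_det_X_inv_smul_map_sub_one (M : Matrix n n K) :
    IsUnit ((X : RatFunc K)⁻¹ • M.map (algebraMap K (RatFunc K)) - 1).det := by
  have hX : (X : RatFunc K) ≠ 0 := X_ne_zero
  have hscale : (X : RatFunc K)⁻¹ • M.map (algebraMap K (RatFunc K)) - 1 =
      -(X : RatFunc K)⁻¹ • ((X : RatFunc K) • 1 - M.map (algebraMap K (RatFunc K))) := by
    rw [smul_sub, smul_smul, neg_mul, inv_mul_cancel₀ hX, neg_smul, neg_smul, one_smul,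
      sub_neg_eq_add, neg_add_eq_sub]
  rw [hscale, Matrix.det_smul, isUnit_iff_ne_zero]
  exact mul_ne_zero (pow_ne_zero _ (by simpa using hX)) (det_X_smul_one_sub_map_ne_zero M)

end Determinant

theorem isUnit_det_tQ_inv_smul_map_intCast_sub_one {n : Type*} [Fintype n] [DecidableEq n]
    (P : Matrix n n ℤ) : IsUnit (tQ⁻¹ • P.map (Int.cast : ℤ → RatFunc ℚ) - 1).det := by
  rw [tQ]
  convert RatFunc.isUnit_det_X_inv_smul_map_sub_one (P.map (Int.cast : ℤ → ℚ)) using 4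
  ext; simp

section Conjugation

universe u

noncomputable def RatFunc.evalRingHom {K L : Type u} [Field K] [Field L] [Algebra K L] {a : L}
    (ha : Transcendental K a) : RatFunc K →+* L :=
  liftRingHom (Polynomial.aeval a).toRingHom
    (nonZeroDivisors_le_comap_nonZeroDivisors_of_injective _ (transcendental_iff_injective.mp ha))

theorem RatFunc.evalRingHom_apply {K L : Type u} [Field K] [Field L] [Algebra K L] {a : L}
    (ha : Transcendental K a) (p : RatFunc K) :
    evalRingHom ha p = RatFunc.eval (algebraMap K L) a p := by
  simp [evalRingHom, liftRingHom_apply, RatFunc.eval, Polynomial.aeval_def]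

theorem transcendental_tQ_inv : Transcendental ℚ tQ⁻¹ := by
  have hX : Transcendental ℚ (RatFunc.X : RatFunc ℚ) := by
    simpa [RatFunc.algebraMap_X] using (transcendental_algebraMap_iff
      (RatFunc.algebraMap_injective ℚ)).2 (Polynomial.transcendental_X ℚ)
  exact fun h => hX (by simpa [tQ] using h.inv)

noncomputable def conjRingHom : RatFunc ℚ →+* RatFunc ℚ :=
  RatFunc.evalRingHom transcendental_tQ_inv

theorem coe_conjRingHom : ⇑conjRingHom = conjQ :=
  funext (RatFunc.evalRingHom_apply transcendental_tQ_inv)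

theorem conjRingHom_tQ : conjRingHom tQ = tQ⁻¹ := by
  simp [coe_conjRingHom, conjQ, tQ]

theorem conjQ_mem_Lam {z : RatFunc ℚ} (hz : z ∈ Lam) : conjQ z ∈ Lam := by
  have hLam : Lam ≤ Lam.comap conjRingHom := by
    refine Subring.closure_le.2 (Set.insert_subset_iff.2 ⟨?_, Set.singleton_subset_iff.2 ?_⟩)
    all_goals simp only [SetLike.mem_coe, Subring.mem_comap, map_inv₀, conjRingHom_tQ, inv_inv]
    exacts [Subring.subset_closure (by simp), Subring.subset_closure (by simp)]
  simpa [coe_conjRingHom] using hLam hz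

theorem conjQ_smul_sub_one_mulVec {n : Type*} [Fintype n] [DecidableEq n] (P : Matrix n n ℤ)
    (y : n → RatFunc ℚ) :
    (fun i => conjQ (((tQ • P.map Int.cast - 1) *ᵥ y) i)) =
      (tQ⁻¹ • P.map Int.cast - 1) *ᵥ fun i => conjQ (y i) := by
  have hmap : (tQ • P.map (Int.cast : ℤ → RatFunc ℚ) - 1).map conjRingHom =
      tQ⁻¹ • P.map Int.cast - 1 := by
    ext i j
    by_cases h : i = j
    · subst h; simp [conjRingHom_tQ]
    · simp [Matrix.one_apply_ne h, conjRingHom_tQ]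
  funext i
  rw [← coe_conjRingHom, RingHom.map_mulVec, hmap]
  rfl

end Conjugation

section IntegerMatrices

variable {R : Type*} [CommRing R] {l m n : Type*} [Fintype m]

theorem Matrix.map_intCast_mul (M : Matrix l m ℤ) (N : Matrix m n ℤ) :
    (M * N).map (Int.cast : ℤ → R) = M.map Int.cast * N.map Int.cast :=
  Matrix.map_mul (f := Int.castRingHom R)

theorem Matrix.isUnit_det_map_intCast [Fintype n] [DecidableEq n] {P : Matrix n n ℤ}
    (hP : IsUnit P.det) : IsUnit (P.map (Int.cast : ℤ → R)).det := by
  have h := hP.map (Int.castRingHom R)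
  rwa [RingHom.map_det] at h

end IntegerMatrices

section IntegralVectors

variable {R : Type*} [CommRing R] (S : Subring R) {m n : Type*} [Fintype n]

theorem Subring.dotProduct_mem {u v : n → R} (hu : ∀ i, u i ∈ S) (hv : ∀ i, v i ∈ S) :
    u ⬝ᵥ v ∈ S :=
  S.sum_mem fun i _ => S.mul_mem (hu i) (hv i)

theorem Subring.map_intCast_mulVec_mem (M : Matrix m n ℤ) {v : n → R} (hv : ∀ i, v i ∈ S)
    (i : m) : (M.map Int.cast *ᵥ v) i ∈ S :=
  S.dotProduct_mem (fun j => intCast_mem S (M i j)) hv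

end IntegralVectors

theorem fibred_blanchfield_well_defined_general (k : ℕ)
    (J P : Matrix (Fin k) (Fin k) ℤ)
    (hJ : J.det = 1 ∨ J.det = -1) (hP : Pᵀ * J * P = J)
    (J' P' : Matrix (Fin k) (Fin k) (RatFunc ℚ))
    (hJ' : J' = J.map Int.cast) (hP' : P' = P.map Int.cast)
    (x w y v : Fin k → RatFunc ℚ)
    (hx : ∀ i, x i ∈ Lam) (hw : ∀ i, w i ∈ Lam) (hy : ∀ i, y i ∈ Lam) (hv : ∀ i, v i ∈ Lam) :
    -- (i)
    (((tQ • P' - 1).mulVec x) ⬝ᵥ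
        (J' * (tQ⁻¹ • P' - 1)⁻¹).mulVec (fun i => conjQ (w i)) =
      -tQ * (x ⬝ᵥ (J' * P'⁻¹).mulVec (fun i => conjQ (w i))))
    ∧ (((tQ • P' - 1).mulVec x) ⬝ᵥ
        (J' * (tQ⁻¹ • P' - 1)⁻¹).mulVec (fun i => conjQ (w i)) ∈ Lam)
    -- (ii)
    ∧ (v ⬝ᵥ (J' * (tQ⁻¹ • P' - 1)⁻¹).mulVec
          (fun i => conjQ (((tQ • P' - 1).mulVec y) i)) =
        v ⬝ᵥ J'.mulVec (fun i => conjQ (y i)))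
    ∧ (v ⬝ᵥ (J' * (tQ⁻¹ • P' - 1)⁻¹).mulVec
          (fun i => conjQ (((tQ • P' - 1).mulVec y) i)) ∈ Lam) := by
  subst hJ' hP'
  have hPdet : IsUnit P.det := isUnit_det_of_transpose_mul_mul_eq hP (Int.isUnit_iff.2 hJ)
  have hPJ : (P.map (Int.cast : ℤ → RatFunc ℚ))ᵀ * J.map Int.cast = (Pᵀ * J).map Int.cast := by
    rw [← transpose_map]
    exact (map_intCast_mul _ _).symm
  have hP' : (P.map (Int.cast : ℤ → RatFunc ℚ))ᵀ * J.map Int.cast * P.map Int.cast =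
      J.map Int.cast := by
    rw [hPJ]
    exact (map_intCast_mul (Pᵀ * J) P).symm.trans (congrArg (Matrix.map · Int.cast) hP)
  have hA := isUnit_det_tQ_inv_smul_map_intCast_sub_one P
  have hi := smul_sub_one_mulVec_dotProduct hP' (t := tQ) RatFunc.X_ne_zero hA x
    (fun i => conjQ (w i))
  have hii := dotProduct_mul_inv_mulVec_mulVec hA (J.map Int.cast) v (fun i => conjQ (y i))
  rw [← conjQ_smul_sub_one_mulVec] at hii
  refine ⟨by rw [hi, transpose_mul_eq_mul_inv hP' (isUnit_det_map_intCast hPdet)], ?_, hii, ?_⟩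
  · rw [hi, hPJ]
    exact Lam.mul_mem (Lam.neg_mem (Subring.subset_closure (by simp))) <|
      Lam.dotProduct_mem hx (Lam.map_intCast_mulVec_mem _ fun i => conjQ_mem_Lam (hw i))
  · rw [hii]
    exact Lam.dotProduct_mem hv (Lam.map_intCast_mulVec_mem J fun i => conjQ_mem_Lam (hy i))

theorem fibred_blanchfield_well_defined (k : ℕ)
    (J P : Matrix (Fin k) (Fin k) ℤ)
    (hJ : J.det = 1 ∨ J.det = -1) (hJskew : Jᵀ = -J) (hP : Pᵀ * J * P = J)
    (J' P' : Matrix (Fin k) (Fin k) (RatFunc ℚ))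
    (hJ' : J' = J.map Int.cast) (hP' : P' = P.map Int.cast)
    (x w y v : Fin k → RatFunc ℚ)
    (hx : ∀ i, x i ∈ Lam) (hw : ∀ i, w i ∈ Lam) (hy : ∀ i, y i ∈ Lam) (hv : ∀ i, v i ∈ Lam) :
    -- (i)
    (((tQ • P' - 1).mulVec x) ⬝ᵥ
        (J' * (tQ⁻¹ • P' - 1)⁻¹).mulVec (fun i => conjQ (w i)) =
      -tQ * (x ⬝ᵥ (J' * P'⁻¹).mulVec (fun i => conjQ (w i))))
    ∧ (((tQ • P' - 1).mulVec x) ⬝ᵥ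
        (J' * (tQ⁻¹ • P' - 1)⁻¹).mulVec (fun i => conjQ (w i)) ∈ Lam)
    -- (ii)
    ∧ (v ⬝ᵥ (J' * (tQ⁻¹ • P' - 1)⁻¹).mulVec
          (fun i => conjQ (((tQ • P' - 1).mulVec y) i)) =
        v ⬝ᵥ J'.mulVec (fun i => conjQ (y i)))
    ∧ (v ⬝ᵥ (J' * (tQ⁻¹ • P' - 1)⁻¹).mulVec
          (fun i => conjQ (((tQ • P' - 1).mulVec y) i)) ∈ Lam) :=
  fibred_blanchfield_well_defined_general k J P hJ hP J' P' hJ' hP' x w y v hx hw hy hv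
end

section
/- Let A be a 2g×2g integer matrix with det(A - Aᵀ) = ±1. Then Λ^{2g} = A·Λ^{2g} + (A - t⁻¹Aᵀ)·Λ^{2g} as Λ = ℤ[t,t⁻¹]-modules. Equivalently, the composition Λ^{2g} → Λ^{2g}/(A - t⁻¹Aᵀ)Λ^{2g} of multiplication by A with the quotient map is surjective. -/
open Matrix

set_option maxHeartbeats 2000000
set_option synthInstance.maxHeartbeats 2000000

/-! Since `A - Aᵀ` is unimodular, every `w ∈ Λ^{2g}` is `(A - Aᵀ) x` for some `x ∈ Λ^{2g}`, and
`(A - Aᵀ) x = A ((1 - t) x) + (A - t⁻¹ Aᵀ) (t x)`. -/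

lemma tQ_mem_Lam : tQ ∈ Lam := Subring.subset_closure (by simp)

namespace Matrix

variable {R : Type*} [CommRing R] {m n : Type*} [Fintype n]

theorem mulVec_mem_subring (S : Subring R) {M : Matrix m n R} {v : n → R}
    (hM : ∀ i j, M i j ∈ S) (hv : ∀ j, v j ∈ S) (i : m) : (M *ᵥ v) i ∈ S :=
  Subring.sum_mem _ fun j _ => mul_mem (hM i j) (hv j)

theorem exists_mulVec_eq_of_isUnit_det [DecidableEq n] (S : Subring R) {M : Matrix n n ℤ}
    (hM : IsUnit M.det) {w : n → R} (hw : ∀ i, w i ∈ S) :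
    ∃ x : n → R, (∀ i, x i ∈ S) ∧ M.map Int.cast *ᵥ x = w := by
  refine ⟨M⁻¹.map Int.cast *ᵥ w, mulVec_mem_subring S (fun i j => intCast_mem S _) hw, ?_⟩
  have hmap : M.map (Int.castRingHom R) * M⁻¹.map (Int.castRingHom R) = 1 := by
    rw [← Matrix.map_mul, mul_nonsing_inv M hM]
    exact Matrix.map_one _ Int.cast_zero Int.cast_one
  rw [mulVec_mulVec]
  exact hmap ▸ one_mulVec w

theorem mulVec_one_sub_smul_add_mulVec_sub_smul_transpose {t s : R} (hst : s * t = 1)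
    (A : Matrix n n R) (x : n → R) :
    A *ᵥ ((1 - t) • x) + (A - s • Aᵀ) *ᵥ (t • x) = (A - Aᵀ) *ᵥ x := by
  rw [mulVec_smul, mulVec_smul, sub_mulVec, sub_mulVec, smul_mulVec, smul_sub, smul_smul,
    mul_comm t s, hst, one_smul, sub_smul, one_smul]
  abel

end Matrix

theorem iota_plus_surjective_onto_cokernel (g : ℕ)
    (A : Matrix (Fin (2*g)) (Fin (2*g)) ℤ)
    (hA : (A - Aᵀ).det = 1 ∨ (A - Aᵀ).det = -1)
    (A' : Matrix (Fin (2*g)) (Fin (2*g)) (RatFunc ℚ)) (hA' : A' = A.map Int.cast)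
    (w : Fin (2*g) → RatFunc ℚ) (hw : ∀ i, w i ∈ Lam) :
    ∃ u v : Fin (2*g) → RatFunc ℚ, (∀ i, u i ∈ Lam) ∧ (∀ i, v i ∈ Lam) ∧
      w = A'.mulVec u + (A' - tQ⁻¹ • A'ᵀ).mulVec v := by
  have hdet : IsUnit (A - Aᵀ).det := by
    rcases hA with h | h <;> simp [h]
  obtain ⟨x, hx, rfl⟩ := exists_mulVec_eq_of_isUnit_det Lam hdet hw
  have hcast : (A - Aᵀ).map (Int.cast : ℤ → RatFunc ℚ) = A' - A'ᵀ := by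
    rw [hA', Matrix.map_sub _ Int.cast_sub, transpose_map]
  refine ⟨(1 - tQ) • x, tQ • x, fun i => mul_mem (sub_mem (one_mem _) tQ_mem_Lam) (hx i),
    fun i => mul_mem tQ_mem_Lam (hx i), ?_⟩
  rw [hcast, mulVec_one_sub_smul_add_mulVec_sub_smul_transpose
    (inv_mul_cancel₀ (show tQ ≠ 0 from RatFunc.X_ne_zero)) A' x]
end
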